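/- arXiv:1707.01681 — 9 statements merged into one kernel-verified Lean document; each statement's English description precedes it below -/
import Mathlib

section
/- Fix real numbers a, a′ and a real φ > 0, and set E = 2 − 2·cosh φ. Consider sequences ψ : ℤ → ℝ satisfying the decay ansatz ψₙ = ψ₋₁·e^{(n+1)φ} for all n ≤ −1 and ψₙ = ψ₀·e^{−nφ} for all n ≥ 0, together with the interaction equations −ψ₋₂ + 2ψ₋₁ + (−1+a)ψ₀ = E·ψ₋₁ and −(1+a′)ψ₋₁ + 2ψ₀ − ψ₁ = E·ψ₀ (the free equations −ψₙ₋₁ + 2ψₙ − ψₙ₊₁ = E·ψₙ for n ≤ −2 and n ≥ 1 are then automatic). Then a nonzero such sequence ψ exists if and only if e^{2φ} = (1−a)(1+a′). -/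
/-!
Write `q = e^φ`. On the ansatz, `ψ₋₂ = ψ₋₁/q` and `ψ₁ = ψ₀/q`, and `2 - 2 cosh φ = 2 - q - 1/q`, so
the two interaction equations collapse to the linear system `(1 - a) ψ₀ = q ψ₋₁`,
`(1 + a') ψ₋₁ = q ψ₀`. The ansatz sequence is determined by `(ψ₋₁, ψ₀)`, and this system has a
nonzero solution exactly when its determinant `q² - (1 - a)(1 + a')` vanishes.
-/

open Real

theorem exists_ne_zero_and_eq_and_eq_iff {K : Type*} [Field K] {p r q : K} (hq : q ≠ 0) :
    (∃ x y : K, (x ≠ 0 ∨ y ≠ 0) ∧ p * y = q * x ∧ r * x = q * y) ↔ q ^ 2 = p * r := by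
  constructor
  · rintro ⟨x, y, hxy, h₁, h₂⟩
    have hx : (q ^ 2 - p * r) * x = 0 := by linear_combination (-q) * h₁ - p * h₂
    have hy : (q ^ 2 - p * r) * y = 0 := by linear_combination (-r) * h₁ - q * h₂
    rcases hxy with hxy | hxy
    · exact sub_eq_zero.1 ((mul_eq_zero.1 hx).resolve_right hxy)
    · exact sub_eq_zero.1 ((mul_eq_zero.1 hy).resolve_right hxy)
  · intro h
    exact ⟨p, q, Or.inr hq, mul_comm p q, by linear_combination -h⟩

noncomputable def twoSidedExp (φ x y : ℝ) (n : ℤ) : ℝ :=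
  if n ≤ -1 then x * exp ((n + 1) * φ) else y * exp (-n * φ)

section twoSidedExp

variable {φ x y : ℝ} {n : ℤ}

theorem twoSidedExp_of_le (hn : n ≤ -1) : twoSidedExp φ x y n = x * exp ((n + 1) * φ) :=
  if_pos hn

theorem twoSidedExp_of_nonneg (hn : 0 ≤ n) : twoSidedExp φ x y n = y * exp (-n * φ) :=
  if_neg (by omega)

@[simp]
theorem twoSidedExp_neg_one : twoSidedExp φ x y (-1) = x := by
  simp [twoSidedExp_of_le]

@[simp]
theorem twoSidedExp_zero : twoSidedExp φ x y 0 = y := by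
  simp [twoSidedExp_of_nonneg]

@[simp]
theorem twoSidedExp_neg_two : twoSidedExp φ x y (-2) = x * exp (-φ) := by
  rw [twoSidedExp_of_le (by norm_num)]
  norm_num

@[simp]
theorem twoSidedExp_one : twoSidedExp φ x y 1 = y * exp (-φ) := by
  rw [twoSidedExp_of_nonneg (by norm_num)]
  norm_num

theorem twoSidedExp_eq_zero_iff : twoSidedExp φ x y = 0 ↔ x = 0 ∧ y = 0 := by
  refine ⟨fun h => ⟨by simpa using congrFun h (-1), by simpa using congrFun h 0⟩, ?_⟩
  rintro ⟨rfl, rfl⟩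
  funext n
  simp [twoSidedExp]

end twoSidedExp

theorem eq_twoSidedExp_of_forall {φ : ℝ} {ψ : ℤ → ℝ}
    (hL : ∀ n : ℤ, n ≤ -1 → ψ n = ψ (-1) * exp (((n : ℝ) + 1) * φ))
    (hR : ∀ n : ℤ, 0 ≤ n → ψ n = ψ 0 * exp (-(n : ℝ) * φ)) :
    ψ = twoSidedExp φ (ψ (-1)) (ψ 0) := by
  funext n
  rcases le_or_gt n (-1) with hn | hn
  · rw [hL n hn, twoSidedExp_of_le hn]
  · rw [hR n (by omega), twoSidedExp_of_nonneg (by omega)]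

theorem left_interaction_iff (a φ x y : ℝ) :
    -(x * exp (-φ)) + 2 * x + (-1 + a) * y = (2 - 2 * cosh φ) * x ↔
      (1 - a) * y = exp φ * x := by
  rw [cosh_eq]
  constructor <;> intro h <;> linarith

theorem right_interaction_iff (a' φ x y : ℝ) :
    -(1 + a') * x + 2 * y - y * exp (-φ) = (2 - 2 * cosh φ) * y ↔
      (1 + a') * x = exp φ * y := by
  rw [cosh_eq]
  constructor <;> intro h <;> linarith

theorem J1_matching_general (a a' φ : ℝ) :
    (∃ ψ : ℤ → ℝ, ψ ≠ 0 ∧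
      (∀ n : ℤ, n ≤ -1 → ψ n = ψ (-1) * Real.exp (((n : ℝ) + 1) * φ)) ∧
      (∀ n : ℤ, 0 ≤ n → ψ n = ψ 0 * Real.exp (-(n : ℝ) * φ)) ∧
      -ψ (-2) + 2 * ψ (-1) + (-1 + a) * ψ 0 = (2 - 2 * Real.cosh φ) * ψ (-1) ∧
      -(1 + a') * ψ (-1) + 2 * ψ 0 - ψ 1 = (2 - 2 * Real.cosh φ) * ψ 0) ↔
    Real.exp (2 * φ) = (1 - a) * (1 + a') := by
  have hsq : exp (2 * φ) = exp φ ^ 2 := by rw [sq, ← exp_add, two_mul]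
  rw [hsq, ← exists_ne_zero_and_eq_and_eq_iff (exp_ne_zero φ)]
  constructor
  · rintro ⟨ψ, hψ, hL, hR, h₁, h₂⟩
    rw [eq_twoSidedExp_of_forall hL hR] at hψ h₁ h₂
    simp only [twoSidedExp_neg_one, twoSidedExp_zero, twoSidedExp_neg_two, twoSidedExp_one] at h₁ h₂
    refine ⟨ψ (-1), ψ 0, ?_, (left_interaction_iff ..).1 h₁, (right_interaction_iff ..).1 h₂⟩
    rwa [Ne, twoSidedExp_eq_zero_iff, not_and_or] at hψ
  · rintro ⟨x, y, hxy, h₁, h₂⟩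
    refine ⟨twoSidedExp φ x y, ?_, fun n hn => ?_, fun n hn => ?_, ?_, ?_⟩
    · rwa [Ne, twoSidedExp_eq_zero_iff, not_and_or]
    · rw [twoSidedExp_neg_one, twoSidedExp_of_le hn]
    · rw [twoSidedExp_zero, twoSidedExp_of_nonneg hn]
    · simpa using (left_interaction_iff a φ x y).2 h₁
    · simpa using (right_interaction_iff a' φ x y).2 h₂

/-- In the `J = 1` model, a nonzero sequence satisfying the decay ansatz and the
two interaction equations exists iff `e^{2φ} = (1-a)(1+a')`. -/
theorem J1_matching (a a' φ : ℝ) (hφ : 0 < φ) :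
    (∃ ψ : ℤ → ℝ, ψ ≠ 0 ∧
      (∀ n : ℤ, n ≤ -1 → ψ n = ψ (-1) * Real.exp (((n : ℝ) + 1) * φ)) ∧
      (∀ n : ℤ, 0 ≤ n → ψ n = ψ 0 * Real.exp (-(n : ℝ) * φ)) ∧
      -ψ (-2) + 2 * ψ (-1) + (-1 + a) * ψ 0 = (2 - 2 * Real.cosh φ) * ψ (-1) ∧
      -(1 + a') * ψ (-1) + 2 * ψ 0 - ψ 1 = (2 - 2 * Real.cosh φ) * ψ 0) ↔
    Real.exp (2 * φ) = (1 - a) * (1 + a') :=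
  J1_matching_general a a' φ
end

section
/- Let a, a′, b, b′ be real numbers, let φ be real, and set x = e^{φ}, t = x² = e^{2φ}, u = (1−a)(1+a′) − 1 and v = (1−b)(1+b′) − 1. Then the determinant of the 4×4 matching matrix M = [[x, −1+b, 0, 0], [−1−b′, x + x⁻¹, −1+a, 0], [0, −1−a′, x + x⁻¹, −1+b], [0, 0, −1−b′, x]] equals t² − (1+u+2v)·t + v². In particular, M has a nontrivial kernel if and only if t² − (1+u+2v)·t + v² = 0. -/
/-!
The matching matrix is tridiagonal, so its determinant is a continuant. The off-diagonal
products are `(-1 + b)(-1 - b') = 1 + v` and `(-1 + a)(-1 - a') = 1 + u`, and the middle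
diagonal entries are `x + x⁻¹ = (t + 1) / x`, so that every term of the continuant is a
polynomial in `t = x²`; collecting them gives `t² - (1 + u + 2v) t + v²`.
-/

theorem Matrix.det_tridiagonal_fin_four {R : Type*} [CommRing R]
    (d₁ d₂ d₃ d₄ e₁ e₂ e₃ f₁ f₂ f₃ : R) :
    !![d₁, e₁, 0, 0; f₁, d₂, e₂, 0; 0, f₂, d₃, e₃; 0, 0, f₃, d₄].det =
      d₁ * d₂ * d₃ * d₄ - d₁ * d₂ * e₃ * f₃ - d₁ * e₂ * f₂ * d₄ - e₁ * f₁ * d₃ * d₄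
        + e₁ * f₁ * e₃ * f₃ := by
  simp [Matrix.det_succ_row_zero, Fin.sum_univ_succ, Fin.succAbove]
  ring

theorem det_matching_matrix {K : Type*} [Field K] {x : K} (hx : x ≠ 0) (a a' b b' : K) :
    !![x, -1 + b, 0, 0;
       -1 - b', x + x⁻¹, -1 + a, 0;
       0, -1 - a', x + x⁻¹, -1 + b;
       0, 0, -1 - b', x].det =
      x ^ 2 * x ^ 2 - (1 + ((1 - a) * (1 + a') - 1) + 2 * ((1 - b) * (1 + b') - 1)) * x ^ 2
        + ((1 - b) * (1 + b') - 1) ^ 2 := by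
  rw [Matrix.det_tridiagonal_fin_four]
  field_simp
  ring

/-- The `J = 2` 4×4 matching determinant equals `t² - (1+u+2v) t + v²`, where
`x = e^φ`, `t = x²`, `u = (1-a)(1+a') - 1`, `v = (1-b)(1+b') - 1`; hence the
matching matrix has a nontrivial kernel iff `t² - (1+u+2v) t + v² = 0`. -/
theorem J2_matching_determinant (a a' b b' φ : ℝ) :
    Matrix.det
      !![Real.exp φ, -1 + b, 0, 0;
         -1 - b', Real.exp φ + (Real.exp φ)⁻¹, -1 + a, 0;
         0, -1 - a', Real.exp φ + (Real.exp φ)⁻¹, -1 + b;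
         0, 0, -1 - b', Real.exp φ] =
      (Real.exp φ) ^ 2 * (Real.exp φ) ^ 2
        - (1 + ((1 - a) * (1 + a') - 1) + 2 * ((1 - b) * (1 + b') - 1))
            * (Real.exp φ) ^ 2
        + ((1 - b) * (1 + b') - 1) ^ 2 ∧
    ((∃ ψ : Fin 4 → ℝ, ψ ≠ 0 ∧
        Matrix.mulVec
          !![Real.exp φ, -1 + b, 0, 0;
             -1 - b', Real.exp φ + (Real.exp φ)⁻¹, -1 + a, 0;
             0, -1 - a', Real.exp φ + (Real.exp φ)⁻¹, -1 + b;
             0, 0, -1 - b', Real.exp φ] ψ = 0) ↔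
      (Real.exp φ) ^ 2 * (Real.exp φ) ^ 2
        - (1 + ((1 - a) * (1 + a') - 1) + 2 * ((1 - b) * (1 + b') - 1))
            * (Real.exp φ) ^ 2
        + ((1 - b) * (1 + b') - 1) ^ 2 = 0) := by
  have hdet := det_matching_matrix (Real.exp_ne_zero φ) a a' b b'
  exact ⟨hdet, hdet ▸ Matrix.exists_mulVec_eq_zero_iff⟩
end

section
/- Let u, v be real numbers with −1 < v < 1. Then there exists a real t > 1 with t² − (1+u+2v)·t + v² = 0 if and only if u > (v−1)² − 1. -/
/-!
With `P t = t² - (1 + u + 2v) t + v²` one has `P 1 = (v - 1)² - 1 - u`, so the claim is that `P`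
has a root beyond `1` exactly when `P 1 < 0`. A monic quadratic that is negative at `x` has a
root beyond `x` (the larger root of the quadratic formula). Conversely, the roots have product
`v² < 1`, so a root `t > 1` forces the other root below `1`, and `P 1 < 0` lies between them.
-/

theorem exists_root_gt_of_quadratic_neg {b c x : ℝ} (hx : x ^ 2 - b * x + c < 0) :
    ∃ t, x < t ∧ t ^ 2 - b * t + c = 0 := by
  have hdisc : (2 * x - b) ^ 2 < b ^ 2 - 4 * c := by nlinarith
  set s := Real.sqrt (b ^ 2 - 4 * c)
  have hs_sq : s ^ 2 = b ^ 2 - 4 * c := Real.sq_sqrt (by nlinarith [sq_nonneg (2 * x - b)])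
  have hs : 2 * x - b < s := by
    by_contra! h
    nlinarith [Real.sqrt_nonneg (b ^ 2 - 4 * c)]
  exact ⟨(b + s) / 2, by linarith, by nlinarith⟩

theorem quadratic_neg_of_root_gt {b c x t : ℝ} (hx : 0 < x) (hc : c < x ^ 2) (hxt : x < t)
    (ht : t ^ 2 - b * t + c = 0) : x ^ 2 - b * x + c < 0 := by
  have hother : t * (b - t) < t * x := by nlinarith
  have hfactor : x ^ 2 - b * x + c = (x - t) * (x - (b - t)) := by linear_combination ht
  rw [hfactor]
  exact mul_neg_of_neg_of_pos (by linarith) (by nlinarith)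

theorem exists_root_gt_iff_quadratic_neg {b c x : ℝ} (hx : 0 < x) (hc : c < x ^ 2) :
    (∃ t, x < t ∧ t ^ 2 - b * t + c = 0) ↔ x ^ 2 - b * x + c < 0 :=
  ⟨fun ⟨_, hxt, ht⟩ => quadratic_neg_of_root_gt hx hc hxt ht, exists_root_gt_of_quadratic_neg⟩

/-- For `-1 < v < 1`, the quadratic `t² - (1+u+2v) t + v² = 0` has a root `t > 1`
iff `u > (v-1)² - 1`. -/
theorem J2_bound_state_iff_parabola (u v : ℝ) (hv1 : -1 < v) (hv2 : v < 1) :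
    (∃ t : ℝ, 1 < t ∧ t ^ 2 - (1 + u + 2 * v) * t + v ^ 2 = 0) ↔
      (v - 1) ^ 2 - 1 < u := by
  have hv_sq : v ^ 2 < 1 ^ 2 := by nlinarith
  have hP_one : (1 : ℝ) ^ 2 - (1 + u + 2 * v) * 1 + v ^ 2 = (v - 1) ^ 2 - 1 - u := by ring
  rw [exists_root_gt_iff_quadratic_neg one_pos hv_sq, hP_one, sub_neg]
end

section
/- Let u, v be real numbers with v < −1. (i) If u > −1 − 4v, then the number t₊ = (1/2)·[1 + u + 2v + √((1+u)(1+u+4v))] is a well-defined real root of t² − (1+u+2v)·t + v² = 0 and satisfies t₊ > 1. (ii) If −1 < u < −1 − 4v, then the discriminant (1+u)(1+u+4v) is negative and the quadratic t² − (1+u+2v)·t + v² = 0 has no real roots, i.e. the ground-state energy has become complex. -/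
/-!
With `b = 1 + u + 2v` the discriminant of `t² - b t + v²` factors as
`b² - 4v² = (b - 2v)(b + 2v) = (1 + u)(1 + u + 4v)`. For `v < -1` and `u > -1 - 4v` both factors
are positive, so `t₊` is a genuine root, and `t₊ ≥ b / 2 > -v > 1`. For `-1 < u < -1 - 4v` the
factors have opposite signs, so the discriminant is negative and there is no real root.
-/

theorem sq_sub_mul_add_eq_zero_of_sq_eq {b c s : ℝ} (hs : s ^ 2 = b ^ 2 - 4 * c) :
    ((b + s) / 2) ^ 2 - b * ((b + s) / 2) + c = 0 := by
  linear_combination hs / 4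

theorem sq_sub_mul_add_pos_of_sq_lt {b c : ℝ} (h : b ^ 2 < 4 * c) (t : ℝ) :
    0 < t ^ 2 - b * t + c := by
  nlinarith [sq_nonneg (2 * t - b)]

theorem secular_discrim_eq (u v : ℝ) :
    (1 + u + 2 * v) ^ 2 - 4 * v ^ 2 = (1 + u) * (1 + u + 4 * v) := by
  ring

/-- For `v < -1`: (i) if `u > -1 - 4v` then
`t₊ = (1 + u + 2v + √((1+u)(1+u+4v)))/2` is a real root of
`t² - (1+u+2v) t + v² = 0` with `t₊ > 1`; (ii) if `-1 < u < -1 - 4v` then the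
discriminant `(1+u)(1+u+4v)` is negative and the quadratic has no real roots. -/
theorem J2_ground_state_boundary (u v : ℝ) (hv : v < -1) :
    ((-1 - 4 * v < u →
        (0 ≤ (1 + u) * (1 + u + 4 * v) ∧
          ((1 + u + 2 * v + Real.sqrt ((1 + u) * (1 + u + 4 * v))) / 2) ^ 2
              - (1 + u + 2 * v)
                * ((1 + u + 2 * v + Real.sqrt ((1 + u) * (1 + u + 4 * v))) / 2)
              + v ^ 2 = 0 ∧
          1 < (1 + u + 2 * v + Real.sqrt ((1 + u) * (1 + u + 4 * v))) / 2)) ∧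
      (-1 < u → u < -1 - 4 * v →
        ((1 + u) * (1 + u + 4 * v) < 0 ∧
          ∀ t : ℝ, t ^ 2 - (1 + u + 2 * v) * t + v ^ 2 ≠ 0))) := by
  constructor
  · intro hu
    have hD : 0 ≤ (1 + u) * (1 + u + 4 * v) :=
      (mul_pos (by linarith) (by linarith)).le
    refine ⟨hD, sq_sub_mul_add_eq_zero_of_sq_eq ?_, ?_⟩
    · rw [Real.sq_sqrt hD, secular_discrim_eq]
    · linarith [Real.sqrt_nonneg ((1 + u) * (1 + u + 4 * v))]
  · intro hu₁ hu₂
    have hD : (1 + u) * (1 + u + 4 * v) < 0 := mul_neg_of_pos_of_neg (by linarith) (by linarith)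
    refine ⟨hD, fun t => (sq_sub_mul_add_pos_of_sq_lt ?_ t).ne'⟩
    linarith [secular_discrim_eq u v]
end

section
/- Let u, v be real numbers with v > 1 and u > −1. Then (1+u)(1+u+4v) > 0, and the larger root t₊ = (1/2)·[1 + u + 2v + √((1+u)(1+u+4v))] of the quadratic t² − (1+u+2v)·t + v² = 0 is real and satisfies t₊ > 1; hence the J = 2 ground state exists throughout the region {v > 1, u > −1}. -/
/-! The discriminant of `t² − (1+u+2v)t + v²` factors as `(1+u+2v)² − 4v² = (1+u)(1+u+4v)`,
a product of two positive factors when `u > −1`, `v > 0`; and the larger root is at least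
half the linear coefficient, `(1+u+2v)/2 > 1`. -/

theorem quadratic_eq_zero_at_half_add_of_sq_eq_discrim {K : Type*} [Field K] [CharZero K]
    {b c s : K} (hs : s ^ 2 = b ^ 2 - 4 * c) :
    ((b + s) / 2) ^ 2 - b * ((b + s) / 2) + c = 0 := by
  linear_combination hs / 4

/-- For `v > 1` and `u > -1`, the discriminant `(1+u)(1+u+4v)` is positive and
the larger root `t₊` of `t² - (1+u+2v) t + v² = 0` is real with `t₊ > 1`. -/
theorem J2_ground_state_v_large (u v : ℝ) (hv : 1 < v) (hu : -1 < u) :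
    0 < (1 + u) * (1 + u + 4 * v) ∧
      ((1 + u + 2 * v + Real.sqrt ((1 + u) * (1 + u + 4 * v))) / 2) ^ 2
          - (1 + u + 2 * v)
            * ((1 + u + 2 * v + Real.sqrt ((1 + u) * (1 + u + 4 * v))) / 2)
          + v ^ 2 = 0 ∧
      1 < (1 + u + 2 * v + Real.sqrt ((1 + u) * (1 + u + 4 * v))) / 2 := by
  have hD : 0 < (1 + u) * (1 + u + 4 * v) := mul_pos (by linarith) (by linarith)
  have hsq := Real.sq_sqrt hD.le
  refine ⟨hD, quadratic_eq_zero_at_half_add_of_sq_eq_discrim (by rw [hsq]; ring), ?_⟩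
  linarith [Real.sqrt_nonneg ((1 + u) * (1 + u + 4 * v))]
end

section
/- Let u, v be real numbers and suppose either (v > 1 and −1 < u < v² − 2v) or (v < −1 and −1 − 4v < u < v² − 2v). Then the discriminant (1+u)(1+u+4v) is positive and both roots t_± = (1/2)·[1 + u + 2v ± √((1+u)(1+u+4v))] of t² − (1+u+2v)·t + v² = 0 are real and strictly greater than 1; in particular the smaller root t₋ > 1, so the J = 2 model supports a first excited bound state in these parameter regions. -/
/-!
The roots are `t± = (s ± √(s² - 4q))/2` with `s = 1 + u + 2v`, `q = v²`, and
`s² - 4q = (1 + u)(1 + u + 4v)`; in both regions the two factors are positive.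
The smaller root exceeds `1` as soon as the vertex `s/2` lies right of `1` and
`P(1) = 1 - s + q = v² - 2v - u` is positive, since then `√(s² - 4q) < s - 2`.
-/

namespace Real

lemma quadratic_eq_zero_of_sq_eq_discrim {s q r : ℝ} (hr : r ^ 2 = s ^ 2 - 4 * q) :
    ((s + r) / 2) ^ 2 - s * ((s + r) / 2) + q = 0 ∧
      ((s - r) / 2) ^ 2 - s * ((s - r) / 2) + q = 0 :=
  ⟨by linear_combination hr / 4, by linear_combination hr / 4⟩

lemma one_lt_sub_sqrt_discrim_div_two {s q : ℝ} (hs : 2 < s) (hP1 : 0 < 1 - s + q) :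
    1 < (s - √(s ^ 2 - 4 * q)) / 2 := by
  have : √(s ^ 2 - 4 * q) < s - 2 := by
    rw [sqrt_lt' (by linarith)]
    linarith
  linarith

lemma sub_sqrt_div_two_le_add_sqrt_div_two (s D : ℝ) : (s - √D) / 2 ≤ (s + √D) / 2 := by
  linarith [sqrt_nonneg D]

end Real

open Real

lemma J2_bound_state_region {u v : ℝ}
    (h : (1 < v ∧ -1 < u ∧ u < v ^ 2 - 2 * v) ∨
         (v < -1 ∧ -1 - 4 * v < u ∧ u < v ^ 2 - 2 * v)) :
    0 < 1 + u ∧ 0 < 1 + u + 4 * v ∧ 2 < 1 + u + 2 * v ∧ 0 < 1 - (1 + u + 2 * v) + v ^ 2 := by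
  rcases h with ⟨hv, hu, hu'⟩ | ⟨hv, hu, hu'⟩ <;> refine ⟨?_, ?_, ?_, ?_⟩ <;> linarith

/-- In the regions `{v > 1, -1 < u < v² - 2v}` and `{v < -1, -1 - 4v < u < v² - 2v}`
the discriminant is positive and both roots `t₊, t₋` of
`t² - (1+u+2v) t + v² = 0` are real and `> 1`. -/
theorem J2_first_excited_state_exists (u v : ℝ)
    (h : (1 < v ∧ -1 < u ∧ u < v ^ 2 - 2 * v) ∨
         (v < -1 ∧ -1 - 4 * v < u ∧ u < v ^ 2 - 2 * v)) :
    0 < (1 + u) * (1 + u + 4 * v) ∧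
      ((1 + u + 2 * v + Real.sqrt ((1 + u) * (1 + u + 4 * v))) / 2) ^ 2
          - (1 + u + 2 * v)
            * ((1 + u + 2 * v + Real.sqrt ((1 + u) * (1 + u + 4 * v))) / 2)
          + v ^ 2 = 0 ∧
      ((1 + u + 2 * v - Real.sqrt ((1 + u) * (1 + u + 4 * v))) / 2) ^ 2
          - (1 + u + 2 * v)
            * ((1 + u + 2 * v - Real.sqrt ((1 + u) * (1 + u + 4 * v))) / 2)
          + v ^ 2 = 0 ∧
      1 < (1 + u + 2 * v + Real.sqrt ((1 + u) * (1 + u + 4 * v))) / 2 ∧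
      1 < (1 + u + 2 * v - Real.sqrt ((1 + u) * (1 + u + 4 * v))) / 2 := by
  obtain ⟨hu, huv, hs, hP1⟩ := J2_bound_state_region h
  have hD : 0 < (1 + u) * (1 + u + 4 * v) := mul_pos hu huv
  have hdiscrim : (1 + u) * (1 + u + 4 * v) = (1 + u + 2 * v) ^ 2 - 4 * v ^ 2 := by ring
  obtain ⟨hplus, hminus⟩ := quadratic_eq_zero_of_sq_eq_discrim ((sq_sqrt hD.le).trans hdiscrim)
  have hlower : 1 < (1 + u + 2 * v - √((1 + u) * (1 + u + 4 * v))) / 2 :=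
    hdiscrim ▸ one_lt_sub_sqrt_discrim_div_two hs hP1
  exact ⟨hD, hplus, hminus,
    hlower.trans_le (sub_sqrt_div_two_le_add_sqrt_div_two _ _), hlower⟩
end

section
/- For all real t, u, v, w the polynomial identity t⁴ − (1+u+2v+2w)·t³ + (2uw + (v+w)²)·t² + (w²(1−u) + 2vw)·t + w² = (t·(t−v−w) − w)² − t·(1+u)·(t−w)² holds. Consequently, the J = 3 secular equation is equivalent (for t ≥ 0) to t·(t−v−w) − w = ±(t−w)·√(t(1+u)). -/
def secularQuartic {R : Type*} [CommRing R] (t u v w : R) : R :=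
  t ^ 4 - (1 + u + 2 * v + 2 * w) * t ^ 3 + (2 * u * w + (v + w) ^ 2) * t ^ 2
    + (w ^ 2 * (1 - u) + 2 * v * w) * t + w ^ 2

theorem secularQuartic_eq {R : Type*} [CommRing R] (t u v w : R) :
    secularQuartic t u v w = (t * (t - v - w) - w) ^ 2 - t * (1 + u) * (t - w) ^ 2 := by
  unfold secularQuartic
  ring

theorem sq_sub_mul_sq_eq_zero_iff {a b c : ℝ} (hc : 0 ≤ c) :
    a ^ 2 - c * b ^ 2 = 0 ↔ a = b * √c ∨ a = -(b * √c) := by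
  rw [← sq_eq_sq_iff_eq_or_eq_neg, mul_pow, Real.sq_sqrt hc, mul_comm c, sub_eq_zero]

/-- The `J = 3` secular quartic factorizes as
`P(t) = (t(t-v-w) - w)² - t(1+u)(t-w)²`; consequently, for `t ≥ 0` (with the
square root real, i.e. `t(1+u) ≥ 0`) the secular equation `P(t) = 0` is
equivalent to `t(t-v-w) - w = ±(t-w)√(t(1+u))`. -/
theorem J3_secular_factorization :
    (∀ t u v w : ℝ,
      t ^ 4 - (1 + u + 2 * v + 2 * w) * t ^ 3
          + (2 * u * w + (v + w) ^ 2) * t ^ 2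
          + (w ^ 2 * (1 - u) + 2 * v * w) * t + w ^ 2 =
        (t * (t - v - w) - w) ^ 2 - t * (1 + u) * (t - w) ^ 2) ∧
    (∀ t u v w : ℝ, 0 ≤ t → 0 ≤ t * (1 + u) →
      (t ^ 4 - (1 + u + 2 * v + 2 * w) * t ^ 3
          + (2 * u * w + (v + w) ^ 2) * t ^ 2
          + (w ^ 2 * (1 - u) + 2 * v * w) * t + w ^ 2 = 0 ↔
        (t * (t - v - w) - w = (t - w) * Real.sqrt (t * (1 + u)) ∨
         t * (t - v - w) - w = -((t - w) * Real.sqrt (t * (1 + u)))))) := by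
  refine ⟨secularQuartic_eq, fun t u v w _ htu => ?_⟩
  rw [← sq_sub_mul_sq_eq_zero_iff htu, ← secularQuartic_eq]
  rfl
end

section
/- For every triple of real numbers (u₀, v₀, w₀) there exist ε > 0 and C > 0 such that for all λ ∈ (0, ε), setting (u,v,w) = (λu₀, λv₀, λw₀), the quartic P(t) = t⁴ − (1+u+2v+2w)·t³ + (2uw+(v+w)²)·t² + (w²(1−u)+2vw)·t + w² has a real root t₀ with |t₀ − (1 + λ(u₀ + 2v₀ + 2w₀))| ≤ C·λ², and every complex root s of P with |s| ≥ 1/2 is equal to t₀ (so t₀ is the unique non-small root, the remaining three roots tending to 0 as λ → 0). -/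
/-!
Write the secular quartic as `t³ (t - c) + q(t)` with `c = 1 + λ(u₀ + 2v₀ + 2w₀)` and `q`
a quadratic whose coefficients are `O(λ²)`. On `t ≥ 1/2` the perturbation `q` is dominated by
`t³ · O(λ²)`, so the quartic changes sign across `[c - O(λ²), c + O(λ²)]`, which gives a real
root `t₀` there. Dividing by `s - t₀` leaves a monic cubic whose lower coefficients are again
`O(λ²)`; such a cubic has no root of modulus `≥ 1/2`.
-/

open Filter Topology

def quartic {R : Type*} [CommRing R] (c β δ ω z : R) : R :=
  z ^ 4 - c * z ^ 3 + β * z ^ 2 + δ * z + ω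

section quartic

variable {R : Type*} [CommRing R]

theorem quartic_eq (c β δ ω z : R) :
    quartic c β δ ω z = z ^ 3 * (z - c) + (β * z ^ 2 + δ * z + ω) := by
  unfold quartic; ring

theorem quartic_sub_quartic (c β δ ω z t : R) :
    quartic c β δ ω z - quartic c β δ ω t =
      (z - t) * (z ^ 3 + (t - c) * z ^ 2 + (t * (t - c) + β) * z
        + (t * (t * (t - c) + β) + δ)) := by
  unfold quartic; ring

theorem Complex.ofReal_quartic (c β δ ω t : ℝ) :
    ((quartic c β δ ω t : ℝ) : ℂ) = quartic (c : ℂ) β δ ω t := by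
  unfold quartic; push_cast; ring

end quartic

theorem cubic_ne_zero_of_le_norm {𝕜 : Type*} [NormedField 𝕜] {A B C z : 𝕜} {r : ℝ}
    (hr : 0 ≤ r) (h : ‖A‖ * r ^ 2 + ‖B‖ * r + ‖C‖ < r ^ 3) (hz : r ≤ ‖z‖) :
    z ^ 3 + A * z ^ 2 + B * z + C ≠ 0 := by
  intro h0
  have hcube : ‖z‖ ^ 3 ≤ ‖A‖ * ‖z‖ ^ 2 + ‖B‖ * ‖z‖ + ‖C‖ := by
    have : z ^ 3 = -(A * z ^ 2 + B * z + C) := by linear_combination h0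
    calc ‖z‖ ^ 3 = ‖A * z ^ 2 + B * z + C‖ := by rw [← norm_pow, this, norm_neg]
      _ ≤ ‖A * z ^ 2‖ + ‖B * z‖ + ‖C‖ := norm_add₃_le
      _ = ‖A‖ * ‖z‖ ^ 2 + ‖B‖ * ‖z‖ + ‖C‖ := by rw [norm_mul, norm_mul, norm_pow]
  -- `ρ ↦ ρ³ - ‖A‖ρ² - ‖B‖ρ - ‖C‖` is positive at `r`, and increasing on `[r, ∞)` since
  -- `‖A‖ < r` and `‖B‖ < r²`.
  have hA : ‖A‖ < r := by nlinarith [norm_nonneg B, norm_nonneg C]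
  have hB : ‖B‖ < r ^ 2 := by nlinarith [norm_nonneg A, norm_nonneg C]
  have hslope : ‖A‖ * (‖z‖ + r) + ‖B‖ ≤ ‖z‖ ^ 2 + ‖z‖ * r + r ^ 2 := by
    nlinarith [norm_nonneg A]
  nlinarith [mul_le_mul_of_nonneg_left hslope (sub_nonneg.2 hz)]

theorem eq_of_quartic_eq_zero {𝕜 : Type*} [NormedField 𝕜] {c β δ ω s t : 𝕜}
    (hs : quartic c β δ ω s = 0) (ht : quartic c β δ ω t = 0) (ht_le : ‖t‖ ≤ 3 / 2)
    (hsmall : 34 * (‖t - c‖ + ‖β‖ + ‖δ‖) < 1) (hs_ge : 1 / 2 ≤ ‖s‖) : s = t := by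
  have hfactor := quartic_sub_quartic c β δ ω s t
  rw [hs, ht, sub_zero, eq_comm, mul_eq_zero, sub_eq_zero] at hfactor
  refine hfactor.resolve_right (cubic_ne_zero_of_le_norm (by norm_num) ?_ hs_ge)
  have hB : ‖t * (t - c) + β‖ ≤ 3 / 2 * ‖t - c‖ + ‖β‖ :=
    (norm_add_le _ _).trans (by rw [norm_mul]; gcongr)
  have hC : ‖t * (t * (t - c) + β) + δ‖ ≤ 3 / 2 * ‖t * (t - c) + β‖ + ‖δ‖ :=
    (norm_add_le _ _).trans (by rw [norm_mul]; gcongr)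
  nlinarith [norm_nonneg (t - c), norm_nonneg β, norm_nonneg δ]

theorem abs_quadratic_le_mul_cube {β δ ω t : ℝ} (ht : 1 / 2 ≤ t) :
    |β * t ^ 2 + δ * t + ω| ≤ 8 * (|β| + |δ| + |ω|) * t ^ 3 := by
  have h2 : t ^ 2 ≤ 8 * t ^ 3 := by nlinarith
  have h1 : t ≤ 8 * t ^ 3 := by nlinarith
  have h0 : 1 ≤ 8 * t ^ 3 := by nlinarith
  calc |β * t ^ 2 + δ * t + ω| ≤ |β| * t ^ 2 + |δ| * t + |ω| := by
        refine (abs_add_three _ _ _).trans_eq ?_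
        rw [abs_mul, abs_mul, abs_of_nonneg (by positivity : (0 : ℝ) ≤ t ^ 2),
          abs_of_nonneg (by linarith : (0 : ℝ) ≤ t)]
    _ ≤ 8 * (|β| + |δ| + |ω|) * t ^ 3 := by
        nlinarith [mul_le_mul_of_nonneg_left h2 (abs_nonneg β),
          mul_le_mul_of_nonneg_left h1 (abs_nonneg δ),
          mul_le_mul_of_nonneg_left h0 (abs_nonneg ω)]

theorem exists_quartic_root_near {c β δ ω η : ℝ} (hc : 3 / 4 ≤ c)
    (hη : |β| + |δ| + |ω| ≤ η) (hη_le : η ≤ 1 / 32) :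
    ∃ t, quartic c β δ ω t = 0 ∧ |t - c| ≤ 8 * η := by
  have hη₀ : 0 ≤ η := (by positivity : (0 : ℝ) ≤ |β| + |δ| + |ω|).trans hη
  have hbound : ∀ t, 1 / 2 ≤ t → |β * t ^ 2 + δ * t + ω| ≤ 8 * η * t ^ 3 := fun t ht =>
    (abs_quadratic_le_mul_cube ht).trans (by gcongr)
  have hlo : quartic c β δ ω (c - 8 * η) ≤ 0 := by
    have := (abs_le.1 (hbound (c - 8 * η) (by linarith))).2
    rw [quartic_eq]; linarith
  have hhi : 0 ≤ quartic c β δ ω (c + 8 * η) := by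
    have := (abs_le.1 (hbound (c + 8 * η) (by linarith))).1
    rw [quartic_eq]; linarith
  obtain ⟨t, ⟨hlo_t, hhi_t⟩, hroot⟩ :=
    intermediate_value_Icc (by linarith : c - 8 * η ≤ c + 8 * η)
      (by unfold quartic; fun_prop : Continuous (quartic c β δ ω)).continuousOn ⟨hlo, hhi⟩
  exact ⟨t, hroot, abs_le.2 ⟨by linarith, by linarith⟩⟩

theorem exists_quartic_root_forall_le_norm {c β δ ω η : ℝ} (hc : |c - 1| ≤ 1 / 4)
    (hη : |β| + |δ| + |ω| ≤ η) (hη_le : η ≤ 1 / 400) :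
    ∃ t, quartic c β δ ω t = 0 ∧ |t - c| ≤ 8 * η ∧
      ∀ s : ℂ, quartic (c : ℂ) β δ ω s = 0 → 1 / 2 ≤ ‖s‖ → s = t := by
  obtain ⟨hc₁, hc₂⟩ := abs_le.1 hc
  obtain ⟨t, hroot, hnear⟩ := exists_quartic_root_near (c := c) (by linarith) hη (by linarith)
  obtain ⟨ht₁, ht₂⟩ := abs_le.1 hnear
  refine ⟨t, hroot, hnear, fun s hs hs_ge => eq_of_quartic_eq_zero hs ?_ ?_ ?_ hs_ge⟩
  · rw [← Complex.ofReal_quartic, hroot, Complex.ofReal_zero]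
  · rw [Complex.norm_real, Real.norm_eq_abs, abs_le]; constructor <;> linarith
  · simp only [← Complex.ofReal_sub, Complex.norm_real, Real.norm_eq_abs]
    linarith [abs_nonneg ω]

theorem abs_secular_coeffs_le {u v w lam : ℝ} (hu : |lam * u| ≤ 1) :
    |2 * (lam * u) * (lam * w) + (lam * v + lam * w) ^ 2|
        + |(lam * w) ^ 2 * (1 - lam * u) + 2 * (lam * v) * (lam * w)| + |(lam * w) ^ 2|
      ≤ (|2 * u * w + (v + w) ^ 2| + (2 * w ^ 2 + |2 * v * w|) + w ^ 2) * lam ^ 2 := by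
  have h1 : |1 - lam * u| ≤ 2 := (abs_sub _ _).trans (by rw [abs_one]; linarith)
  have hd : |w ^ 2 * (1 - lam * u) + 2 * v * w| ≤ 2 * w ^ 2 + |2 * v * w| :=
    (abs_add_le _ _).trans <| by
      rw [abs_mul, abs_sq]; linarith [mul_le_mul_of_nonneg_left h1 (sq_nonneg w)]
  rw [show 2 * (lam * u) * (lam * w) + (lam * v + lam * w) ^ 2
      = lam ^ 2 * (2 * u * w + (v + w) ^ 2) by ring,
    show (lam * w) ^ 2 * (1 - lam * u) + 2 * (lam * v) * (lam * w)
      = lam ^ 2 * (w ^ 2 * (1 - lam * u) + 2 * v * w) by ring,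
    abs_mul, abs_mul, abs_sq, abs_sq, mul_pow]
  nlinarith [sq_nonneg lam]

/-- For small `(u,v,w) = λ(u₀,v₀,w₀)` the `J = 3` secular quartic has a unique
non-small root `t₀ = 1 + λ(u₀ + 2v₀ + 2w₀) + O(λ²)`: every complex root of
modulus at least `1/2` equals `t₀`. -/
theorem J3_unique_large_root (u₀ v₀ w₀ : ℝ) :
    ∃ ε > (0 : ℝ), ∃ C > (0 : ℝ), ∀ lam : ℝ, 0 < lam → lam < ε →
      ∃ t₀ : ℝ,
        (t₀ ^ 4
            - (1 + lam * u₀ + 2 * (lam * v₀) + 2 * (lam * w₀)) * t₀ ^ 3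
            + (2 * (lam * u₀) * (lam * w₀) + (lam * v₀ + lam * w₀) ^ 2) * t₀ ^ 2
            + ((lam * w₀) ^ 2 * (1 - lam * u₀) + 2 * (lam * v₀) * (lam * w₀)) * t₀
            + (lam * w₀) ^ 2 = 0) ∧
        |t₀ - (1 + lam * (u₀ + 2 * v₀ + 2 * w₀))| ≤ C * lam ^ 2 ∧
        ∀ s : ℂ,
          s ^ 4
              - ((1 + lam * u₀ + 2 * (lam * v₀) + 2 * (lam * w₀) : ℝ) : ℂ) * s ^ 3
              + ((2 * (lam * u₀) * (lam * w₀) + (lam * v₀ + lam * w₀) ^ 2 : ℝ) : ℂ) * s ^ 2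
              + (((lam * w₀) ^ 2 * (1 - lam * u₀) + 2 * (lam * v₀) * (lam * w₀) : ℝ) : ℂ) * s
              + (((lam * w₀) ^ 2 : ℝ) : ℂ) = 0 →
            (1 / 2 : ℝ) ≤ ‖s‖ → s = (t₀ : ℂ) := by
  set M := |2 * u₀ * w₀ + (v₀ + w₀) ^ 2| + (2 * w₀ ^ 2 + |2 * v₀ * w₀|) + w₀ ^ 2
  have hM : 0 ≤ M := by positivity
  have hsmall : ∀ᶠ lam in 𝓝 (0 : ℝ),
      |lam * (u₀ + 2 * v₀ + 2 * w₀)| < 1 / 4 ∧ |lam * u₀| < 1 ∧ M * lam ^ 2 < 1 / 400 :=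
    ((Continuous.tendsto' (by fun_prop) 0 0 (by simp)).eventually_lt_const (by norm_num)).and <|
      ((Continuous.tendsto' (by fun_prop) 0 0 (by simp)).eventually_lt_const one_pos).and
        ((Continuous.tendsto' (by fun_prop) 0 0 (by simp)).eventually_lt_const (by norm_num))
  obtain ⟨ε, hε, hε_small⟩ := Metric.eventually_nhds_iff.1 hsmall
  refine ⟨ε, hε, 8 * M + 1, by positivity, fun lam hlam hlam_lt => ?_⟩
  obtain ⟨hσ, hu, hMlam⟩ := hε_small (by rwa [Real.dist_0_eq_abs, abs_of_pos hlam])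
  obtain ⟨t₀, hroot, hnear, hunique⟩ :=
    exists_quartic_root_forall_le_norm (c := 1 + lam * u₀ + 2 * (lam * v₀) + 2 * (lam * w₀))
      (by ring_nf at hσ ⊢; exact hσ.le) (abs_secular_coeffs_le hu.le) hMlam.le
  refine ⟨t₀, hroot, ?_, hunique⟩
  calc |t₀ - (1 + lam * (u₀ + 2 * v₀ + 2 * w₀))|
      = |t₀ - (1 + lam * u₀ + 2 * (lam * v₀) + 2 * (lam * w₀))| := by ring_nf
    _ ≤ 8 * (M * lam ^ 2) := hnear
    _ ≤ (8 * M + 1) * lam ^ 2 := by nlinarith [sq_nonneg lam]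
end

section
/- The quartic polynomial p(t) = t⁴ − 40t³ + 291t² − 340t + 25 (the J = 3 secular polynomial at u = 17, v = 6, w = 5) has exactly four real roots, of which exactly three lie in the open interval (1, ∞) and exactly one lies in the open interval (0, 1). The three roots greater than 1 correspond to the ground state and the first two excited bound states, while the root in (0,1) is spurious (unphysical). -/
/-!
The quartic takes the values `25, -63, 205, -4275, 452025` at `0, 1, 2, 10, 40`, so by the
intermediate value theorem it has a root in each of the four intervals between consecutive
points; having degree four, it has no further roots.
-/

open Polynomial Set Finset

theorem Polynomial.mem_of_isRoot_of_natDegree_le_card {R : Type*} [CommRing R] [IsDomain R]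
    [DecidableEq R] {p : R[X]} (hp : p ≠ 0) {s : Finset R} (hs : ∀ a ∈ s, p.IsRoot a)
    (hdeg : p.natDegree ≤ #s) {x : R} (hx : p.IsRoot x) : x ∈ s := by
  by_contra hxs
  have hsub : (insert x s).val ⊆ p.roots := fun a ha => by
    rw [mem_roots hp]
    rcases Finset.mem_insert.mp ha with rfl | ha
    exacts [hx, hs a ha]
  have hcard := card_le_degree_of_subset_roots hsub
  rw [card_insert_of_notMem hxs] at hcard
  omega

theorem exists_mem_Ioo_eq_zero_of_mul_neg {α : Type*} [ConditionallyCompleteLinearOrder α]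
    [TopologicalSpace α] [OrderTopology α] [DenselyOrdered α] {f : α → ℝ} {a b : α}
    (hab : a ≤ b) (hf : ContinuousOn f (Icc a b)) (h : f a * f b < 0) :
    ∃ x ∈ Ioo a b, f x = 0 := by
  rcases mul_neg_iff.mp h with ⟨ha, hb⟩ | ⟨ha, hb⟩
  · exact intermediate_value_Ioo' hab hf ⟨hb, ha⟩
  · exact intermediate_value_Ioo hab hf ⟨ha, hb⟩

noncomputable def secularPolyJ3 : ℝ[X] :=
  X ^ 4 - C 40 * X ^ 3 + C 291 * X ^ 2 - C 340 * X + C 25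

theorem secularPolyJ3_eval (t : ℝ) :
    secularPolyJ3.eval t = t ^ 4 - 40 * t ^ 3 + 291 * t ^ 2 - 340 * t + 25 := by
  simp [secularPolyJ3]

theorem secularPolyJ3_natDegree : secularPolyJ3.natDegree = 4 := by
  unfold secularPolyJ3
  compute_degree!

theorem secularPolyJ3_ne_zero : secularPolyJ3 ≠ 0 :=
  ne_zero_of_natDegree_gt (n := 0) (by rw [secularPolyJ3_natDegree]; norm_num)

theorem exists_secularPolyJ3_root_mem_Ioo {a b : ℝ} (hab : a ≤ b)
    (h : secularPolyJ3.eval a * secularPolyJ3.eval b < 0) :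
    ∃ t ∈ Ioo a b, t ^ 4 - 40 * t ^ 3 + 291 * t ^ 2 - 340 * t + 25 = 0 := by
  simpa only [secularPolyJ3_eval] using
    exists_mem_Ioo_eq_zero_of_mul_neg hab secularPolyJ3.continuousOn h

/-- The `J = 3` secular quartic at `(u,v,w) = (17,6,5)`, namely
`t⁴ - 40 t³ + 291 t² - 340 t + 25`, has exactly four real roots: exactly three
in `(1, ∞)` and exactly one in `(0, 1)`. -/
theorem J3_example_four_roots :
    ∃ t₁ t₂ t₃ t₄ : ℝ,
      t₁ ≠ t₂ ∧ t₁ ≠ t₃ ∧ t₁ ≠ t₄ ∧ t₂ ≠ t₃ ∧ t₂ ≠ t₄ ∧ t₃ ≠ t₄ ∧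
      0 < t₁ ∧ t₁ < 1 ∧ 1 < t₂ ∧ 1 < t₃ ∧ 1 < t₄ ∧
      (t₁ ^ 4 - 40 * t₁ ^ 3 + 291 * t₁ ^ 2 - 340 * t₁ + 25 = 0) ∧
      (t₂ ^ 4 - 40 * t₂ ^ 3 + 291 * t₂ ^ 2 - 340 * t₂ + 25 = 0) ∧
      (t₃ ^ 4 - 40 * t₃ ^ 3 + 291 * t₃ ^ 2 - 340 * t₃ + 25 = 0) ∧
      (t₄ ^ 4 - 40 * t₄ ^ 3 + 291 * t₄ ^ 2 - 340 * t₄ + 25 = 0) ∧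
      ∀ t : ℝ, t ^ 4 - 40 * t ^ 3 + 291 * t ^ 2 - 340 * t + 25 = 0 →
        t = t₁ ∨ t = t₂ ∨ t = t₃ ∨ t = t₄ := by
  obtain ⟨t₁, ⟨h₁, h₁'⟩, r₁⟩ := exists_secularPolyJ3_root_mem_Ioo (a := 0) (b := 1)
    (by norm_num) (by norm_num [secularPolyJ3_eval])
  obtain ⟨t₂, ⟨h₂, h₂'⟩, r₂⟩ := exists_secularPolyJ3_root_mem_Ioo (a := 1) (b := 2)
    (by norm_num) (by norm_num [secularPolyJ3_eval])
  obtain ⟨t₃, ⟨h₃, h₃'⟩, r₃⟩ := exists_secularPolyJ3_root_mem_Ioo (a := 2) (b := 10)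
    (by norm_num) (by norm_num [secularPolyJ3_eval])
  obtain ⟨t₄, ⟨h₄, -⟩, r₄⟩ := exists_secularPolyJ3_root_mem_Ioo (a := 10) (b := 40)
    (by norm_num) (by norm_num [secularPolyJ3_eval])
  have h₁₂ : t₁ < t₂ := h₁'.trans h₂
  have h₂₃ : t₂ < t₃ := h₂'.trans h₃
  have h₃₄ : t₃ < t₄ := h₃'.trans h₄
  obtain ⟨d₁₂, d₁₃, d₁₄, d₂₃, d₂₄, d₃₄⟩ :
      t₁ ≠ t₂ ∧ t₁ ≠ t₃ ∧ t₁ ≠ t₄ ∧ t₂ ≠ t₃ ∧ t₂ ≠ t₄ ∧ t₃ ≠ t₄ :=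
    ⟨h₁₂.ne, (h₁₂.trans h₂₃).ne, (h₁₂.trans (h₂₃.trans h₃₄)).ne, h₂₃.ne, (h₂₃.trans h₃₄).ne,
      h₃₄.ne⟩
  refine ⟨t₁, t₂, t₃, t₄, d₁₂, d₁₃, d₁₄, d₂₃, d₂₄, d₃₄, h₁, h₁', h₂, h₂.trans h₂₃,
    (h₂.trans h₂₃).trans h₃₄, r₁, r₂, r₃, r₄, fun t ht => ?_⟩
  have hcard : #{t₁, t₂, t₃, t₄} = 4 :=
    card_eq_four.mpr ⟨t₁, t₂, t₃, t₄, d₁₂, d₁₃, d₁₄, d₂₃, d₂₄, d₃₄, rfl⟩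
  have hmem := Polynomial.mem_of_isRoot_of_natDegree_le_card secularPolyJ3_ne_zero
    (s := {t₁, t₂, t₃, t₄}) (by simp [IsRoot, secularPolyJ3_eval, r₁, r₂, r₃, r₄])
    (by rw [hcard, secularPolyJ3_natDegree]) (x := t) (by simpa [IsRoot, secularPolyJ3_eval])
  simpa using hmem
end
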